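/- arXiv:1112.1970 — 4 statements merged into one kernel-verified Lean document; each statement's English description precedes it below -/
import Mathlib

section
/- For every real constant c > 0 there exists a finite nonempty subset A of ℤ² such that, in the Cayley graph of ℤ² with the standard generating set, |∂A| · depth(A) < c · |A| (equivalently |∂A|/|A| < c/depth(A)). -/
/-- The (outer vertex) boundary of a set `A` in a simple graph. -/
def SimpleGraph.boundarySet {V : Type*} (G : SimpleGraph V) (A : Set V) : Set V :=
  {u | u ∉ A ∧ ∃ v ∈ A, G.Adj u v}

/-- The graph distance from a vertex to a set of vertices. -/
noncomputable def SimpleGraph.distToSet {V : Type*} (G : SimpleGraph V) (u : V) (A : Set V) : ℕ :=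
  sInf ((fun v => G.dist u v) '' A)

/-- The depth of a set: the supremum over `u ∈ A` of the distance from `u` to the complement. -/
noncomputable def SimpleGraph.depthSet {V : Type*} (G : SimpleGraph V) (A : Set V) : ℕ :=
  sSup ((fun u => G.distToSet u Aᶜ) '' A)

/-- The Cayley graph of the lattice ℤ² with its standard generating set:
`u` and `v` are adjacent iff they differ by `1` in exactly one coordinate. -/
def zsqGraph : SimpleGraph (ℤ × ℤ) where
  Adj u v := |u.1 - v.1| + |u.2 - v.2| = 1
  symm := by
    constructor
    intro u v h
    rw [abs_sub_comm v.1, abs_sub_comm v.2]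
    exact h
  loopless := by constructor; intro u h; simp at h

/-- The Cayley graph of a group `G` with respect to a generating set `S`. -/
def cayleyGraph {G : Type*} [Group G] (S : Set G) : SimpleGraph G where
  Adj x y := x ≠ y ∧ x⁻¹ * y ∈ S ∪ S⁻¹
  symm := by
    constructor
    rintro x y ⟨hxy, hmem⟩
    refine ⟨hxy.symm, ?_⟩
    have h : y⁻¹ * x = (x⁻¹ * y)⁻¹ := by group
    rw [h]
    rcases hmem with h' | h'
    · exact Or.inr (Set.inv_mem_inv.mpr h')
    · exact Or.inl (by simpa using h')
  loopless := ⟨fun x h => h.1 rfl⟩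

/-- `ballCard S n` is the number of vertices in the ball of radius `n`
(centered at the identity) in the Cayley graph of `G` with respect to `S`. -/
noncomputable def ballCard {G : Type*} [Group G] (S : Set G) (n : ℕ) : ℕ :=
  {x : G | (cayleyGraph S).dist 1 x ≤ n}.ncard

/-
Swiss cheese: take the square `[0, m²)²` and delete the `m²` points of `mℤ²` in it. Every
remaining point is within `ℓ¹`-distance `2m` of a deleted one, so the depth is `O(m)`; the
boundary lies in the outer frame (`4m² + 4` points) together with the holes, so it is `O(m²)`;
and `m⁴ - m²` points remain. Hence `|∂A| · depth(A) = O(m³) = o(|A|)`.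
-/

namespace SimpleGraph

variable {V : Type*} (G : SimpleGraph V)

lemma edist_le_of_adj_succ (f : ℕ → V) (hf : ∀ i, G.Adj (f i) (f (i + 1))) (n : ℕ) :
    G.edist (f 0) (f n) ≤ n := by
  induction n with
  | zero => simp
  | succ n ih =>
    calc G.edist (f 0) (f (n + 1)) ≤ G.edist (f 0) (f n) + G.edist (f n) (f (n + 1)) :=
          G.edist_triangle
      _ ≤ n + 1 := by rw [edist_eq_one_iff_adj.mpr (hf n)]; gcongr

lemma boundarySet_sdiff_subset (S H : Set V) :
    G.boundarySet (S \ H) ⊆ G.boundarySet S ∪ H := by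
  rintro u ⟨hu, v, hv, huv⟩
  by_cases huS : u ∈ S
  · exact Or.inr (by_contra fun huH => hu ⟨huS, huH⟩)
  · exact Or.inl ⟨huS, v, hv.1, huv⟩

lemma distToSet_le {u v : V} {B : Set V} (hv : v ∈ B) : G.distToSet u B ≤ G.dist u v :=
  Nat.sInf_le ⟨v, hv, rfl⟩

lemma depthSet_le {A : Set V} {d : ℕ} (h : ∀ u ∈ A, ∃ v ∉ A, G.dist u v ≤ d) :
    G.depthSet A ≤ d := by
  refine csSup_le' ?_
  rintro _ ⟨u, hu, rfl⟩
  obtain ⟨v, hv, huv⟩ := h u hu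
  exact (G.distToSet_le hv).trans huv

end SimpleGraph

open SimpleGraph

lemma zsqGraph_dist_le_of_le {u v : ℤ × ℤ} (h : u ≤ v) :
    zsqGraph.dist u v ≤ (v.1 - u.1).toNat + (v.2 - u.2).toNat := by
  set a := (v.1 - u.1).toNat
  set b := (v.2 - u.2).toNat
  have hv : v = (u.1 + a, u.2 + b) := by
    have := h.1; have := h.2
    ext <;> simp [a, b] <;> omega
  have horiz : zsqGraph.edist u (u.1 + a, u.2) ≤ a := by
    simpa using zsqGraph.edist_le_of_adj_succ (fun i => (u.1 + i, u.2))
      (fun i => by simp [zsqGraph]) a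
  have vert : zsqGraph.edist (u.1 + a, u.2) v ≤ b := by
    simpa [hv] using zsqGraph.edist_le_of_adj_succ (fun i => (u.1 + a, u.2 + i))
      (fun i => by simp [zsqGraph]) b
  exact ENat.toNat_le_of_le_natCast <| by
    push_cast
    exact zsqGraph.edist_triangle.trans (add_le_add horiz vert)

noncomputable def square (a : ℤ) (n : ℕ) : Finset (ℤ × ℤ) :=
  Finset.Ico a (a + n) ×ˢ Finset.Ico a (a + n)

lemma card_square (a : ℤ) (n : ℕ) : (square a n).card = n ^ 2 := by
  simp [square, sq]

lemma square_subset_square_sub_one_add_two (a : ℤ) (n : ℕ) :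
    square a n ⊆ square (a - 1) (n + 2) := by
  intro p
  simp only [square, Finset.mem_product, Finset.mem_Ico]
  omega

lemma zsqGraph_boundarySet_square_subset (a : ℤ) (n : ℕ) :
    zsqGraph.boundarySet (square a n) ⊆ ↑(square (a - 1) (n + 2) \ square a n) := by
  rintro u ⟨hu, v, hv, huv⟩
  simp only [square, Finset.coe_product, Finset.coe_Ico, Set.mem_prod, Set.mem_Ico] at hu hv
  simp only [square, Finset.coe_sdiff, Finset.coe_product, Finset.coe_Ico, Set.mem_sdiff,
    Set.mem_prod, Set.mem_Ico]
  refine ⟨?_, hu⟩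
  have huv : |u.1 - v.1| + |u.2 - v.2| = 1 := huv
  have h1 := abs_sub_le_iff.mp (show |u.1 - v.1| ≤ 1 by linarith [abs_nonneg (u.2 - v.2)])
  have h2 := abs_sub_le_iff.mp (show |u.2 - v.2| ≤ 1 by linarith [abs_nonneg (u.1 - v.1)])
  push_cast
  omega

lemma ncard_zsqGraph_boundarySet_square_le (a : ℤ) (n : ℕ) :
    (zsqGraph.boundarySet (square a n)).ncard + n ^ 2 ≤ (n + 2) ^ 2 := by
  calc (zsqGraph.boundarySet (square a n)).ncard + n ^ 2
      ≤ (square (a - 1) (n + 2) \ square a n).card + (square a n).card := by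
        rw [← Set.ncard_coe_finset, card_square]
        gcongr
        exacts [Finset.finite_toSet _, zsqGraph_boundarySet_square_subset a n]
    _ = (n + 2) ^ 2 := by
        rw [Finset.card_sdiff_add_card_eq_card (square_subset_square_sub_one_add_two a n),
          card_square]

noncomputable def holes (m : ℕ) : Finset (ℤ × ℤ) := (square 0 m).image ((m : ℤ) • ·)

noncomputable def swissCheese (m : ℕ) : Finset (ℤ × ℤ) := square 0 (m ^ 2) \ holes m

lemma card_holes_le (m : ℕ) : (holes m).card ≤ m ^ 2 :=
  Finset.card_image_le.trans (card_square 0 m).le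

lemma card_swissCheese (m : ℕ) : m ^ 4 ≤ (swissCheese m).card + m ^ 2 :=
  calc m ^ 4 = (square 0 (m ^ 2)).card := by rw [card_square]; ring
    _ ≤ (swissCheese m).card + (holes m).card := Finset.card_le_card_sdiff_add_card
    _ ≤ (swissCheese m).card + m ^ 2 := by gcongr; exact card_holes_le m

lemma ncard_boundarySet_swissCheese (m : ℕ) :
    (zsqGraph.boundarySet (swissCheese m)).ncard + m ^ 4 ≤ (m ^ 2 + 2) ^ 2 + m ^ 2 := by
  have hsub : zsqGraph.boundarySet (swissCheese m) ⊆
      zsqGraph.boundarySet (square 0 (m ^ 2)) ∪ holes m := by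
    rw [swissCheese, Finset.coe_sdiff]
    exact zsqGraph.boundarySet_sdiff_subset _ _
  have hfin : (zsqGraph.boundarySet (square 0 (m ^ 2))).Finite :=
    (Finset.finite_toSet _).subset (zsqGraph_boundarySet_square_subset 0 (m ^ 2))
  have hS : (zsqGraph.boundarySet (square 0 (m ^ 2))).ncard + m ^ 4 ≤ (m ^ 2 + 2) ^ 2 := by
    rw [show m ^ 4 = (m ^ 2) ^ 2 by ring]
    exact ncard_zsqGraph_boundarySet_square_le 0 (m ^ 2)
  calc (zsqGraph.boundarySet (swissCheese m)).ncard + m ^ 4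
      ≤ (zsqGraph.boundarySet (square 0 (m ^ 2))).ncard + (holes m).card + m ^ 4 := by
        rw [← Set.ncard_coe_finset (holes m)]
        gcongr
        exact (Set.ncard_le_ncard hsub (hfin.union (Finset.finite_toSet _))).trans
          (Set.ncard_union_le _ _)
    _ ≤ (m ^ 2 + 2) ^ 2 + m ^ 2 := by linarith [card_holes_le m]

lemma depthSet_swissCheese_le {m : ℕ} (hm : 0 < m) :
    zsqGraph.depthSet (swissCheese m) ≤ 2 * m := by
  have hm' : (0 : ℤ) < m := by exact_mod_cast hm
  refine zsqGraph.depthSet_le fun u hu => ?_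
  have hu : (0 ≤ u.1 ∧ u.1 < m * m) ∧ (0 ≤ u.2 ∧ u.2 < m * m) := by
    simpa [swissCheese, square, sq] using (Finset.mem_sdiff.mp hu).1
  set h : ℤ × ℤ := (m : ℤ) • (u.1 / m, u.2 / m)
  refine ⟨h, fun hh => (Finset.mem_sdiff.mp hh).2 ?_, ?_⟩
  · refine Finset.mem_image_of_mem _ ?_
    simp only [square, Finset.mem_product, Finset.mem_Ico, zero_add]
    exact ⟨⟨Int.ediv_nonneg hu.1.1 hm'.le, Int.ediv_lt_of_lt_mul hm' hu.1.2⟩,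
      Int.ediv_nonneg hu.2.1 hm'.le, Int.ediv_lt_of_lt_mul hm' hu.2.2⟩
  · have hle : h ≤ u := ⟨Int.mul_ediv_self_le hm'.ne', Int.mul_ediv_self_le hm'.ne'⟩
    have h1 : u.1 - h.1 < m := by
      simpa [h, ← Int.emod_def] using Int.emod_lt_of_pos u.1 hm'
    have h2 : u.2 - h.2 < m := by
      simpa [h, ← Int.emod_def] using Int.emod_lt_of_pos u.2 hm'
    rw [dist_comm]
    exact (zsqGraph_dist_le_of_le hle).trans (by omega)

lemma ncard_boundarySet_mul_depthSet_swissCheese_lt {c : ℝ} {m : ℕ} (hm : 2 ≤ m)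
    (hcm : 36 < c * m) :
    ((zsqGraph.boundarySet (swissCheese m)).ncard : ℝ) * zsqGraph.depthSet (swissCheese m) <
      c * (swissCheese m).card := by
  have hx : (2 : ℝ) ≤ m := by exact_mod_cast hm
  have hc : 0 < c := by nlinarith
  have hB : ((zsqGraph.boundarySet (swissCheese m)).ncard : ℝ) ≤ 5 * m ^ 2 + 4 := by
    have : ((zsqGraph.boundarySet (swissCheese m)).ncard : ℝ) + m ^ 4 ≤
        (m ^ 2 + 2) ^ 2 + m ^ 2 := by
      exact_mod_cast ncard_boundarySet_swissCheese m
    nlinarith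
  have hD : (zsqGraph.depthSet (swissCheese m) : ℝ) ≤ 2 * m := by
    exact_mod_cast depthSet_swissCheese_le (by omega)
  have hA : (m : ℝ) ^ 4 ≤ (swissCheese m).card + m ^ 2 := by
    exact_mod_cast card_swissCheese m
  calc ((zsqGraph.boundarySet (swissCheese m)).ncard : ℝ) * zsqGraph.depthSet (swissCheese m)
      ≤ (5 * m ^ 2 + 4) * (2 * m) := by gcongr
    _ ≤ 18 * m ^ 3 := by nlinarith
    _ < c * m * m ^ 3 / 2 := by nlinarith [pow_pos (by linarith : (0 : ℝ) < m) 3]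
    _ = c * (m ^ 4 / 2) := by ring
    _ ≤ c * (m ^ 4 - m ^ 2) := by gcongr; nlinarith [pow_le_pow_left₀ (by norm_num) hx 2]
    _ ≤ c * (swissCheese m).card := by gcongr; linarith

/-- For every real constant `c > 0` there exists a finite nonempty subset `A` of ℤ² such that,
in the Cayley graph of ℤ², `|∂A| ⬝ depth(A) < c ⬝ |A|`. -/
theorem stmt_0 (c : ℝ) (hc : 0 < c) :
    ∃ A : Set (ℤ × ℤ), A.Finite ∧ A.Nonempty ∧
      (((zsqGraph.boundarySet A).ncard : ℝ) * (zsqGraph.depthSet A : ℝ)) < c * (A.ncard : ℝ) := by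
  obtain ⟨m, hm⟩ := exists_nat_gt (max 2 (36 / c))
  have hm2 : 2 ≤ m := by exact_mod_cast (le_max_left _ _).trans hm.le
  have hcm : 36 < c * m := by
    have := (le_max_right _ _).trans_lt hm
    rwa [div_lt_iff₀ hc, mul_comm] at this
  have hne : (swissCheese m).Nonempty := by
    rw [← Finset.card_pos]
    have := card_swissCheese m
    have : m ^ 2 < m ^ 4 := Nat.pow_lt_pow_right (by omega) (by norm_num)
    omega
  refine ⟨swissCheese m, (swissCheese m).finite_toSet, hne, ?_⟩
  rw [Set.ncard_coe_finset]
  exact ncard_boundarySet_mul_depthSet_swissCheese_lt hm2 hcm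
end

section
/- For all integers i, k > 1, the boundary of A_i(k) in the Cayley graph of ℤ² satisfies |∂A_i(k)| = (k−1)² + 4(ki+1). -/
/-- The square grid `X_i(k) = {(m,n) : 0 ≤ m ≤ ki, 0 ≤ n ≤ ki}`. -/
def Xik (i k : ℤ) : Set (ℤ × ℤ) :=
  {p | 0 ≤ p.1 ∧ p.1 ≤ k * i ∧ 0 ≤ p.2 ∧ p.2 ≤ k * i}

/-- The lattice of removed points `Y_i(k) = {(mi, ni) : 1 ≤ m ≤ k-1, 1 ≤ n ≤ k-1}`. -/
def Yik (i k : ℤ) : Set (ℤ × ℤ) :=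
  {p | ∃ m n : ℤ, 1 ≤ m ∧ m ≤ k - 1 ∧ 1 ≤ n ∧ n ≤ k - 1 ∧ p = (m * i, n * i)}

/-- The set `A_i(k) = X_i(k) \ Y_i(k)`. -/
def Aik (i k : ℤ) : Set (ℤ × ℤ) := Xik i k \ Yik i k

/-!
Cutting out the holes `Y_i(k)` turns them into boundary points (the hole `(mi, ni)` has the
neighbour `(mi + 1, ni)` in `A_i(k)` because `i > 1`) and changes nothing else, since every
neighbour of a hole lies in the square `X_i(k)`. So `∂A_i(k) = ∂X_i(k) ⊔ Y_i(k)`; the boundary of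
the square `[0, ki]²` consists of four sides of `ki + 1` points, and there are `(k - 1)²` holes.
-/

namespace SimpleGraph

variable {V : Type*} (G : SimpleGraph V)

theorem boundarySet_diff {X Y : Set V} (hY : ∀ y ∈ Y, ∃ v ∈ X \ Y, G.Adj y v)
    (hYX : ∀ y ∈ Y, G.neighborSet y ⊆ X) :
    G.boundarySet (X \ Y) = G.boundarySet X ∪ Y := by
  ext u
  constructor
  · rintro ⟨hu, v, hv, huv⟩
    by_cases huY : u ∈ Y
    · exact Or.inr huY
    · exact Or.inl ⟨fun huX => hu ⟨huX, huY⟩, v, hv.1, huv⟩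
  · rintro (⟨huX, v, hvX, huv⟩ | huY)
    · exact ⟨fun hu => huX hu.1, v, ⟨hvX, fun hvY => huX (hYX v hvY huv.symm)⟩, huv⟩
    · exact ⟨fun hu => hu.2 huY, hY u huY⟩

theorem disjoint_boundarySet {X Y : Set V} (hYX : Y ⊆ X) : Disjoint (G.boundarySet X) Y :=
  Set.disjoint_left.2 fun _ hu huY => hu.1 (hYX huY)

end SimpleGraph

theorem zsqGraph_adj_iff {u v : ℤ × ℤ} :
    zsqGraph.Adj u v ↔
      (u.1 = v.1 ∧ (u.2 = v.2 + 1 ∨ u.2 + 1 = v.2)) ∨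
        (u.2 = v.2 ∧ (u.1 = v.1 + 1 ∨ u.1 + 1 = v.1)) := by
  change |u.1 - v.1| + |u.2 - v.2| = 1 ↔ _
  rcases abs_cases (u.1 - v.1) with ⟨h₁, _⟩ | ⟨h₁, _⟩ <;>
    rcases abs_cases (u.2 - v.2) with ⟨h₂, _⟩ | ⟨h₂, _⟩ <;> rw [h₁, h₂] <;> omega

theorem zsqGraph_boundarySet_Icc_prod_Icc {a b c d : ℤ} (hab : a ≤ b) (hcd : c ≤ d) :
    zsqGraph.boundarySet (Set.Icc a b ×ˢ Set.Icc c d) =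
      ({a - 1, b + 1} : Set ℤ) ×ˢ Set.Icc c d ∪ Set.Icc a b ×ˢ {c - 1, d + 1} := by
  ext ⟨x, y⟩
  simp only [SimpleGraph.boundarySet, Set.mem_ofPred_eq, Set.mem_union, Set.mem_prod,
    Set.mem_Icc, Set.mem_insert_iff, Set.mem_singleton_iff, Prod.exists, zsqGraph_adj_iff]
  constructor
  · rintro ⟨hxy, v, w, hvw, hadj⟩
    omega
  · intro h
    -- the nearest point of the rectangle is a neighbour
    refine ⟨by omega, max a (min x b), max c (min y d), by omega, by omega⟩

theorem ncard_zsqGraph_boundarySet_Icc_prod_Icc {a b c d : ℤ} (hab : a ≤ b) (hcd : c ≤ d) :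
    ((zsqGraph.boundarySet (Set.Icc a b ×ˢ Set.Icc c d)).ncard : ℤ) =
      2 * (d - c + 1) + 2 * (b - a + 1) := by
  have hdisj : Disjoint (({a - 1, b + 1} : Finset ℤ) ×ˢ Finset.Icc c d)
      (Finset.Icc a b ×ˢ {c - 1, d + 1}) := by
    simp only [Finset.disjoint_left, Finset.mem_product, Finset.mem_insert,
      Finset.mem_singleton, Finset.mem_Icc]
    omega
  rw [zsqGraph_boundarySet_Icc_prod_Icc hab hcd, ← Finset.coe_pair, ← Finset.coe_pair,
    ← Finset.coe_Icc, ← Finset.coe_Icc, ← Finset.coe_product, ← Finset.coe_product,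
    ← Finset.coe_union, Set.ncard_coe_finset, Finset.card_union_of_disjoint hdisj,
    Finset.card_product, Finset.card_product, Finset.card_pair (by omega),
    Finset.card_pair (by omega), Int.card_Icc, Int.card_Icc]
  push_cast
  rw [Int.toNat_of_nonneg (by omega), Int.toNat_of_nonneg (by omega)]
  ring

theorem Xik_eq_Icc_prod_Icc (i k : ℤ) :
    Xik i k = Set.Icc 0 (k * i) ×ˢ Set.Icc 0 (k * i) := by
  ext
  simp only [Xik, Set.mem_ofPred_eq, Set.mem_prod, Set.mem_Icc, and_assoc]

theorem Yik_eq_image (i k : ℤ) :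
    Yik i k = (fun p : ℤ × ℤ => (p.1 * i, p.2 * i)) '' (Set.Icc 1 (k - 1) ×ˢ Set.Icc 1 (k - 1)) := by
  ext
  simp only [Yik, Set.mem_ofPred_eq, Set.mem_image, Set.mem_prod, Set.mem_Icc, Prod.exists]
  grind

theorem ncard_Yik {i k : ℤ} (hi : i ≠ 0) (hk : 1 ≤ k) : ((Yik i k).ncard : ℤ) = (k - 1) ^ 2 := by
  have hinj : Function.Injective fun p : ℤ × ℤ => (p.1 * i, p.2 * i) := fun p q hpq => by
    simp only [Prod.mk.injEq, mul_left_inj' hi] at hpq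
    exact Prod.ext hpq.1 hpq.2
  rw [Yik_eq_image, Set.ncard_image_of_injective _ hinj, ← Finset.coe_Icc, ← Finset.coe_product,
    Set.ncard_coe_finset, Finset.card_product, Int.card_Icc]
  push_cast
  rw [Int.toNat_of_nonneg (by omega)]
  ring

section Yik

variable {i k : ℤ}

theorem bounds_of_mem_Yik (hi : 0 ≤ i) {p : ℤ × ℤ} (hp : p ∈ Yik i k) :
    i ≤ p.1 ∧ p.1 + i ≤ k * i ∧ i ≤ p.2 ∧ p.2 + i ≤ k * i := by
  obtain ⟨m, n, hm₁, hmk, hn₁, hnk, rfl⟩ := hp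
  exact ⟨by nlinarith, by nlinarith, by nlinarith, by nlinarith⟩

theorem Yik_subset_Xik (hi : 0 ≤ i) : Yik i k ⊆ Xik i k := fun p hp => by
  have := bounds_of_mem_Yik hi hp
  simp only [Xik, Set.mem_ofPred_eq]
  omega

theorem neighborSet_subset_Xik_of_mem_Yik (hi : 1 ≤ i) {p : ℤ × ℤ} (hp : p ∈ Yik i k) :
    zsqGraph.neighborSet p ⊆ Xik i k := fun u hu => by
  have := bounds_of_mem_Yik (by omega) hp
  rw [SimpleGraph.mem_neighborSet, zsqGraph_adj_iff] at hu
  simp only [Xik, Set.mem_ofPred_eq]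
  omega

theorem exists_adj_mem_Aik_of_mem_Yik (hi : 1 < i) {p : ℤ × ℤ} (hp : p ∈ Yik i k) :
    ∃ v ∈ Aik i k, zsqGraph.Adj p v := by
  have := bounds_of_mem_Yik (by omega) hp
  refine ⟨(p.1 + 1, p.2), ⟨by simp only [Xik, Set.mem_ofPred_eq]; omega, ?_⟩,
    zsqGraph_adj_iff.2 (by omega)⟩
  -- `p.1` and `p.1 + 1` cannot both be multiples of `i > 1`
  obtain ⟨m, n, -, -, -, -, rfl⟩ := hp
  rintro ⟨m', n', -, -, -, -, h⟩
  have h' : (m' - m) * i = 1 := by grind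
  have := Int.eq_one_of_mul_eq_one_left (by omega) h'
  omega

end Yik

/-- For all integers `i, k > 1`, `|∂A_i(k)| = (k−1)² + 4(ki+1)` in the Cayley graph of ℤ². -/
theorem stmt_3 (i k : ℤ) (hi : 1 < i) (hk : 1 < k) :
    (((zsqGraph.boundarySet (Aik i k)).ncard : ℤ)) = (k - 1) ^ 2 + 4 * (k * i + 1) := by
  have hki : 0 ≤ k * i := by nlinarith
  have hX := Xik_eq_Icc_prod_Icc i k
  have hXfin : (zsqGraph.boundarySet (Xik i k)).Finite := by
    rw [hX, zsqGraph_boundarySet_Icc_prod_Icc hki hki]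
    exact Set.toFinite _
  have hYfin : (Yik i k).Finite := by
    rw [Yik_eq_image]
    exact Set.toFinite _
  rw [Aik, zsqGraph.boundarySet_diff (fun _ => exists_adj_mem_Aik_of_mem_Yik hi)
      (fun _ => neighborSet_subset_Xik_of_mem_Yik hi.le),
    Set.ncard_union_eq (zsqGraph.disjoint_boundarySet (Yik_subset_Xik (by omega))) hXfin hYfin,
    Nat.cast_add, hX, ncard_zsqGraph_boundarySet_Icc_prod_Icc hki hki, ncard_Yik (by omega) hk.le]
  ring
end

section
/- Let G be a group generated by a finite set S, and let X be the Cayley graph of G with respect to S. Assume that for every natural number n the ball of radius n in the word metric satisfies b(n) ≥ (n+1)(n+2)/2. Then every finite nonempty subset A of the vertices of X satisfies |A| ≤ 16 |∂A|². -/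
/-!
For `g ∈ G` let `A_g = {a ∈ A | a * g ∉ A}` (`rightExit A g`). The function `g ↦ |A_g|` is
subadditive and `|A_s| ≤ |∂A|` for every generator `s`, so `|A_g| ≤ |g| · |∂A|`. Double counting
shows that `∑_{g ∈ B} |A ∩ A g⁻¹| ≤ |A|²` for every finite `B`; taking for `B` the ball of radius `n` with
`b(n) ≥ 2|A|` yields some `g` with `|g| ≤ n` and `|A_g| ≥ |A| / 2`, whence `|A| ≤ 2n|∂A|`.
For the least such `n` the growth hypothesis at `n - 1` gives
`n(n+1) ≤ 2b(n-1) < 4|A| ≤ 8n|∂A|`, so `n < 8|∂A|` and `|A| ≤ 16|∂A|²`.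
-/

open scoped Finset

section Displacement

variable {G : Type*} [Group G]

def rightExit (A : Set G) (g : G) : Set G := {a ∈ A | a * g ∉ A}

@[simp]
lemma rightExit_one (A : Set G) : rightExit A 1 = ∅ := by
  ext a; simp [rightExit]

lemma rightExit_mul_subset (A : Set G) (g h : G) :
    rightExit A (g * h) ⊆ rightExit A g ∪ (· * g⁻¹) '' rightExit A h := by
  rintro a ⟨ha, hagh⟩
  by_cases hag : a * g ∈ A
  · exact Or.inr ⟨a * g, ⟨hag, by rwa [← mul_assoc] at hagh⟩, by group⟩
  · exact Or.inl ⟨ha, hag⟩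

lemma ncard_rightExit_mul_le {A : Set G} (hA : A.Finite) (g h : G) :
    (rightExit A (g * h)).ncard ≤ (rightExit A g).ncard + (rightExit A h).ncard :=
  calc (rightExit A (g * h)).ncard
      ≤ (rightExit A g ∪ (· * g⁻¹) '' rightExit A h).ncard :=
        Set.ncard_le_ncard (rightExit_mul_subset A g h)
          ((hA.subset (Set.sep_subset _ _)).union ((hA.subset (Set.sep_subset _ _)).image _))
    _ ≤ (rightExit A g).ncard + ((· * g⁻¹) '' rightExit A h).ncard := Set.ncard_union_le _ _
    _ = (rightExit A g).ncard + (rightExit A h).ncard := by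
        rw [Set.ncard_image_of_injective _ (mul_left_injective g⁻¹)]

lemma Finset.sum_card_filter_mul_mem_le [DecidableEq G] (A B : Finset G) :
    ∑ g ∈ B, #{a ∈ A | a * g ∈ A} ≤ #A * #A :=
  calc ∑ g ∈ B, #{a ∈ A | a * g ∈ A}
      = ∑ a ∈ A, #{g ∈ B | a * g ∈ A} := by
        simp only [Finset.card_filter]; exact Finset.sum_comm
    _ ≤ ∑ _a ∈ A, #A := Finset.sum_le_sum fun a _ =>
        Finset.card_le_card_of_injOn (a * ·) (fun g hg => (Finset.mem_filter.mp hg).2)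
          (fun _ _ _ _ => mul_left_cancel)
    _ = #A * #A := by rw [Finset.sum_const, smul_eq_mul]

lemma exists_mem_ncard_le_two_mul_ncard_rightExit {A B : Set G} (hA : A.Finite)
    (hne : A.Nonempty) (hAB : 2 * A.ncard ≤ B.ncard) :
    ∃ g ∈ B, A.ncard ≤ 2 * (rightExit A g).ncard := by
  classical
  have hApos : 0 < A.ncard := (Set.ncard_pos hA).mpr hne
  have hBpos : 0 < B.ncard := by omega
  lift A to Finset G using hA
  lift B to Finset G using Set.finite_of_ncard_pos hBpos
  simp only [Set.ncard_coe_finset] at hAB hApos ⊢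
  have hBne : B.Nonempty := Finset.card_pos.mp (by simpa using hBpos)
  obtain ⟨g, hg, hle⟩ := Finset.exists_le_of_sum_le hBne
    (f := fun g => #B * #{a ∈ A | a * g ∈ A}) (g := fun _ => #A * #A) (by
      rw [← Finset.mul_sum, Finset.sum_const, smul_eq_mul]
      exact Nat.mul_le_mul_left _ (Finset.sum_card_filter_mul_mem_le A B))
  have hsplit : #{a ∈ A | a * g ∈ A} + (rightExit (A : Set G) g).ncard = #A := by
    have : rightExit (A : Set G) g = ↑({a ∈ A | a * g ∉ A} : Finset G) := by
      ext; simp [rightExit]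
    rw [this, Set.ncard_coe_finset]
    exact Finset.card_filter_add_card_filter_not _
  exact ⟨g, hg, by nlinarith⟩

variable {S : Set G}

lemma cayleyGraph_adj_mul {a s : G} (hs : s ∈ S ∪ S⁻¹) (hne : a * s ≠ a) :
    (cayleyGraph S).Adj a (a * s) :=
  ⟨hne.symm, by simpa using hs⟩

lemma cayleyGraph_reachable (hgen : Subgroup.closure S = ⊤) (x : G) :
    (cayleyGraph S).Reachable 1 x := by
  have hx : x ∈ Subgroup.closure S := hgen ▸ Subgroup.mem_top x
  have step : ∀ y s, (cayleyGraph S).Reachable 1 y → s ∈ S ∪ S⁻¹ →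
      (cayleyGraph S).Reachable 1 (y * s) := fun y s hy hs => by
    by_cases hys : y * s = y
    · rwa [hys]
    · exact hy.trans (cayleyGraph_adj_mul hs hys).reachable
  induction hx using Subgroup.closure_induction_right with
  | one => rfl
  | mul_right y _ s hs hy => exact step y s hy (Or.inl hs)
  | mul_inv_cancel y _ s hs hy => exact step y s⁻¹ hy (Or.inr (Set.inv_mem_inv.mpr hs))

lemma boundarySet_finite (hS : S.Finite) {A : Set G} (hA : A.Finite) :
    ((cayleyGraph S).boundarySet A).Finite := by
  refine (hA.image2 (· * ·) (hS.union hS.inv)).subset ?_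
  rintro u ⟨-, v, hv, hadj⟩
  have := (cayleyGraph S).adj_symm hadj
  exact ⟨v, hv, v⁻¹ * u, this.2, by group⟩

lemma ncard_rightExit_le_ncard_boundarySet {A : Set G}
    (hB : ((cayleyGraph S).boundarySet A).Finite) {s : G} (hs : s ∈ S ∪ S⁻¹) :
    (rightExit A s).ncard ≤ ((cayleyGraph S).boundarySet A).ncard :=
  Set.ncard_le_ncard_of_injOn (· * s)
    (fun a ⟨ha, has⟩ => ⟨has, a, ha,
      ((cayleyGraph S).adj_symm (cayleyGraph_adj_mul hs fun h => has (by rwa [h])))⟩)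
    (mul_left_injective s).injOn hB

lemma ncard_rightExit_le_length_mul {A : Set G} (hA : A.Finite)
    (hB : ((cayleyGraph S).boundarySet A).Finite) {x y : G} (p : (cayleyGraph S).Walk x y) :
    (rightExit A (x⁻¹ * y)).ncard ≤ p.length * ((cayleyGraph S).boundarySet A).ncard := by
  induction p with
  | nil => simp
  | @cons x v y hxv q ih =>
    calc (rightExit A (x⁻¹ * y)).ncard
        = (rightExit A (x⁻¹ * v * (v⁻¹ * y))).ncard := by group
      _ ≤ (rightExit A (x⁻¹ * v)).ncard + (rightExit A (v⁻¹ * y)).ncard :=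
          ncard_rightExit_mul_le hA _ _
      _ ≤ ((cayleyGraph S).boundarySet A).ncard
            + q.length * ((cayleyGraph S).boundarySet A).ncard :=
          add_le_add (ncard_rightExit_le_ncard_boundarySet hB hxv.2) ih
      _ = (q.cons hxv).length * ((cayleyGraph S).boundarySet A).ncard := by
          rw [SimpleGraph.Walk.length_cons]; ring

lemma ncard_rightExit_le_dist_mul (hS : S.Finite) (hgen : Subgroup.closure S = ⊤)
    {A : Set G} (hA : A.Finite) (g : G) :
    (rightExit A g).ncard ≤ (cayleyGraph S).dist 1 g * ((cayleyGraph S).boundarySet A).ncard := by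
  obtain ⟨p, hp⟩ := (cayleyGraph_reachable hgen g).exists_walk_length_eq_dist
  simpa [hp] using ncard_rightExit_le_length_mul hA (boundarySet_finite hS hA) p

end Displacement

/-- If the Cayley graph of a finitely generated group has at least quadratic growth,
`b(n) ≥ (n+1)(n+2)/2`, then every finite nonempty set `A` of vertices satisfies
`|A| ≤ 16 |∂A|²`. -/
theorem stmt_7 {G : Type*} [Group G] (S : Set G) (hS : S.Finite)
    (hgen : Subgroup.closure S = ⊤)
    (hb : ∀ n : ℕ, (n + 1) * (n + 2) ≤ 2 * ballCard S n)
    (A : Set G) (hA : A.Finite) (hne : A.Nonempty) :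
    A.ncard ≤ 16 * ((cayleyGraph S).boundarySet A).ncard ^ 2 := by
  set m := ((cayleyGraph S).boundarySet A).ncard
  have hex : ∃ n, 2 * A.ncard ≤ ballCard S n :=
    ⟨2 * A.ncard, by nlinarith [hb (2 * A.ncard)]⟩
  set n := Nat.find hex
  obtain ⟨g, hg, hAg⟩ := exists_mem_ncard_le_two_mul_ncard_rightExit hA hne (Nat.find_spec hex)
  have hAn : A.ncard ≤ 2 * (n * m) :=
    hAg.trans (Nat.mul_le_mul_left 2 ((ncard_rightExit_le_dist_mul hS hgen hA g).trans
      (Nat.mul_le_mul_right m hg)))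
  obtain ⟨k, hk⟩ : ∃ k, n = k + 1 :=
    Nat.exists_eq_succ_of_ne_zero fun h => by
      have := (Set.ncard_pos hA).mpr hne
      rw [h] at hAn; omega
  have hmin : ballCard S k < 2 * A.ncard := not_le.mp (Nat.find_min hex (by omega))
  have hk8 : k + 2 ≤ 8 * m := by
    have : (k + 1) * (k + 2) < (k + 1) * (8 * m) := by nlinarith [hb k]
    exact (Nat.lt_of_mul_lt_mul_left this).le
  calc A.ncard ≤ 2 * ((k + 1) * m) := hk ▸ hAn
    _ ≤ 2 * ((8 * m) * m) := by gcongr; omega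
    _ = 16 * m ^ 2 := by ring
end

section
/- Let G be a group generated by a finite set S, and let X be the Cayley graph of G with respect to S. Assume that for every natural number n the ball of radius n in the word metric satisfies b(n) ≥ (n+1)(n+2)/2. Then every finite nonempty subset A of the vertices of X satisfies depth(A) < 4√2 · |∂A|, equivalently depth(A)² < 32 |∂A|². -/
open Finset

namespace SimpleGraph

variable {V V' : Type*} {G : SimpleGraph V} {G' : SimpleGraph V'}

lemma dist_map_le (f : G →g G') {u v : V} (h : G.Reachable u v) :
    G'.dist (f u) (f v) ≤ G.dist u v := by
  obtain ⟨w, hw⟩ := h.exists_walk_length_eq_dist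
  simpa [hw] using dist_le (w.map f)

lemma Iso.dist_eq (φ : G ≃g G') (u v : V) : G'.dist (φ u) (φ v) = G.dist u v := by
  by_cases h : G.Reachable u v
  · refine le_antisymm (dist_map_le φ.toHom h) ?_
    simpa using dist_map_le φ.symm.toHom (h.map φ.toHom)
  · rw [dist_eq_zero_of_not_reachable h,
      dist_eq_zero_of_not_reachable (Iso.reachable_iff.not.2 h)]

variable (G)

lemma exists_distToSet_eq_depthSet {A : Set V} (hA : A.Finite) (hne : A.Nonempty) :
    ∃ u ∈ A, G.distToSet u Aᶜ = G.depthSet A :=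
  Nat.sSup_mem (hne.image _) (hA.image _).bddAbove

lemma setOf_dist_le_subset_of_lt_distToSet {u : V} {A : Set V} {m : ℕ}
    (h : m < G.distToSet u Aᶜ) : {x | G.dist u x ≤ m} ⊆ A := by
  intro x hx
  by_contra hxA
  have : G.distToSet u Aᶜ ≤ G.dist u x := Nat.sInf_le ⟨x, hxA, rfl⟩
  exact absurd (h.trans_le this) (not_lt.2 hx)

lemma boundarySet_subset_biUnion_neighborSet (A : Set V) :
    G.boundarySet A ⊆ ⋃ v ∈ A, G.neighborSet v := by
  rintro u ⟨-, v, hv, huv⟩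
  exact Set.mem_biUnion hv huv.symm

end SimpleGraph

section Cayley

open SimpleGraph

variable {G : Type*} [Group G] {S : Set G}

lemma cayleyGraph_adj_mul_left_iff {g x y : G} :
    (cayleyGraph S).Adj (g * x) (g * y) ↔ (cayleyGraph S).Adj x y := by
  simp [cayleyGraph, mul_assoc]

lemma cayleyGraph_reachable_mul (x : G) {s : G} (hs : s ∈ S ∪ S⁻¹) :
    (cayleyGraph S).Reachable x (x * s) := by
  by_cases h : x = x * s
  · rw [← h]
  · exact Adj.reachable ⟨h, by simpa using hs⟩

lemma cayleyGraph_connected (hgen : Subgroup.closure S = ⊤) : (cayleyGraph S).Connected := by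
  refine (connected_iff_exists_forall_reachable _).2 ⟨1, fun x => ?_⟩
  induction hgen ▸ Subgroup.mem_top x using Subgroup.closure_induction_right with
  | one => rfl
  | mul_right x _ s hs hx => exact hx.trans (cayleyGraph_reachable_mul x (Or.inl hs))
  | mul_inv_cancel x _ s hs hx =>
    exact hx.trans (cayleyGraph_reachable_mul x (Or.inr (Set.inv_mem_inv.2 hs)))

variable (S) in
def cayleyGraphMulLeft (g : G) : cayleyGraph S ≃g cayleyGraph S :=
  { Equiv.mulLeft g with map_rel_iff' := cayleyGraph_adj_mul_left_iff }

lemma cayleyGraph_dist_mul_left (g x y : G) :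
    (cayleyGraph S).dist (g * x) (g * y) = (cayleyGraph S).dist x y :=
  (cayleyGraphMulLeft S g).dist_eq x y

lemma cayleyGraph_ncard_setOf_dist_le (u : G) (m : ℕ) :
    {x | (cayleyGraph S).dist u x ≤ m}.ncard = ballCard S m := by
  have : {x | (cayleyGraph S).dist u x ≤ m} = (u * ·) '' {x | (cayleyGraph S).dist 1 x ≤ m} := by
    ext x
    simp [Set.image_mul_left, ← cayleyGraph_dist_mul_left u⁻¹ u x]
  rw [this, Set.ncard_image_of_injective _ (mul_right_injective u), ballCard]

lemma cayleyGraph_finite_setOf_dist_le {m : ℕ} (hm : 0 < ballCard S m) (u : G) :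
    {x | (cayleyGraph S).dist u x ≤ m}.Finite :=
  Set.finite_of_ncard_pos (by rwa [cayleyGraph_ncard_setOf_dist_le])

lemma cayleyGraph_boundarySet_finite (h : 0 < ballCard S 1) {A : Set G} (hA : A.Finite) :
    ((cayleyGraph S).boundarySet A).Finite := by
  refine (hA.biUnion fun v _ => (cayleyGraph_finite_setOf_dist_le h v).subset ?_).subset
    ((cayleyGraph S).boundarySet_subset_biUnion_neighborSet A)
  intro x hx
  exact (dist_eq_one_iff_adj.2 hx).le

theorem cayleyGraph_depthSet_mul_succ_le (hb : ∀ n : ℕ, (n + 1) * (n + 2) ≤ 2 * ballCard S n)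
    (A : Finset G) (hne : A.Nonempty) :
    (cayleyGraph S).depthSet A * ((cayleyGraph S).depthSet A + 1) ≤ 2 * #A := by
  obtain ⟨u, -, hu⟩ := (cayleyGraph S).exists_distToSet_eq_depthSet A.finite_toSet hne
  by_cases h0 : (cayleyGraph S).depthSet A = 0
  · simp [h0]
  obtain ⟨m, hm⟩ := Nat.exists_eq_add_one_of_ne_zero h0
  have hball : ballCard S m ≤ #A := by
    rw [← cayleyGraph_ncard_setOf_dist_le u, ← Set.ncard_coe_finset]
    exact Set.ncard_le_ncard
      ((cayleyGraph S).setOf_dist_le_subset_of_lt_distToSet (by omega)) A.finite_toSet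
  rw [hm]
  linarith [hb m]

end Cayley

section Counting

variable {G : Type*} [Group G] [DecidableEq G]

lemma card_filter_mul_mul_notMem_le (A : Finset G) (g h : G) :
    #{x ∈ A | x * (g * h) ∉ A} ≤ #{x ∈ A | x * g ∉ A} + #{x ∈ A | x * h ∉ A} := by
  have hsplit : {x ∈ A | x * (g * h) ∉ A} ⊆
      {x ∈ A | x * g ∉ A} ∪ {x ∈ A | x * g ∈ A ∧ x * g * h ∉ A} := by
    intro x hx
    simp only [mem_filter, mem_union, ← mul_assoc] at hx ⊢
    tauto
  have hshift : #{x ∈ A | x * g ∈ A ∧ x * g * h ∉ A} ≤ #{x ∈ A | x * h ∉ A} :=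
    card_le_card_of_injOn (· * g) (fun x hx => by simp_all) (fun _ _ _ _ => mul_right_cancel)
  calc #{x ∈ A | x * (g * h) ∉ A}
      ≤ #{x ∈ A | x * g ∉ A} + #{x ∈ A | x * g ∈ A ∧ x * g * h ∉ A} :=
        (card_le_card hsplit).trans (card_union_le _ _)
    _ ≤ _ := by gcongr

lemma exists_card_mul_card_sub_le_card_mul (A B : Finset G) (hB : B.Nonempty) :
    ∃ g ∈ B, #A * (#B - #A) ≤ #B * #{x ∈ A | x * g ∉ A} := by
  have hrow : ∀ x ∈ A, #B - #A ≤ #{g ∈ B | x * g ∉ A} := by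
    intro x _
    have hin : #{g ∈ B | x * g ∈ A} ≤ #A :=
      card_le_card_of_injOn (x * ·) (fun g hg => (mem_filter.1 hg).2)
        (fun _ _ _ _ => mul_left_cancel)
    have := card_filter_add_card_filter_not (s := B) (fun g => x * g ∈ A)
    omega
  apply exists_le_of_sum_le hB
  calc ∑ _g ∈ B, #A * (#B - #A) = #B * ∑ _x ∈ A, (#B - #A) := by simp [mul_left_comm]
    _ ≤ #B * ∑ x ∈ A, #{g ∈ B | x * g ∉ A} := by gcongr with x hx; exact hrow x hx
    _ = ∑ g ∈ B, #B * #{x ∈ A | x * g ∉ A} := by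
      rw [← mul_sum]
      simp only [card_filter]
      rw [sum_comm]

end Counting

section Isoperimetry

open SimpleGraph

variable {G : Type*} [Group G] [DecidableEq G] {S : Set G}

lemma card_filter_mul_notMem_le_ncard_boundarySet (A : Finset G)
    (hA : ((cayleyGraph S).boundarySet A).Finite) {s : G} (hs : s ∈ S ∪ S⁻¹) :
    #{x ∈ A | x * s ∉ A} ≤ ((cayleyGraph S).boundarySet A).ncard := by
  rw [← Set.ncard_coe_finset]
  refine Set.ncard_le_ncard_of_injOn (· * s) ?_ (fun _ _ _ _ => mul_right_cancel) hA
  intro x hx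
  obtain ⟨hxA, hxsA⟩ : x ∈ A ∧ x * s ∉ A := by simpa using hx
  refine ⟨hxsA, x, hxA, fun h => hxsA (by rwa [h]), ?_⟩
  rcases hs with hs | hs <;> simp_all [mul_assoc]

lemma card_filter_mul_notMem_le_length (A : Finset G)
    (hA : ((cayleyGraph S).boundarySet A).Finite) {u v : G} (w : (cayleyGraph S).Walk u v) :
    #{x ∈ A | x * (u⁻¹ * v) ∉ A} ≤ w.length * ((cayleyGraph S).boundarySet A).ncard := by
  induction w with
  | nil => simp
  | @cons u u' v huu' p ih =>
    have hstep := card_filter_mul_notMem_le_ncard_boundarySet A hA huu'.2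
    calc #{x ∈ A | x * (u⁻¹ * v) ∉ A}
        ≤ #{x ∈ A | x * (u⁻¹ * u') ∉ A} + #{x ∈ A | x * (u'⁻¹ * v) ∉ A} := by
          simpa [mul_assoc] using card_filter_mul_mul_notMem_le A (u⁻¹ * u') (u'⁻¹ * v)
      _ ≤ _ := by rw [Walk.length_cons, add_mul, one_mul, add_comm]; gcongr

theorem card_mul_ballCard_sub_card_le (hgen : Subgroup.closure S = ⊤) (A : Finset G)
    (hA : ((cayleyGraph S).boundarySet A).Finite) (n : ℕ) :
    #A * (ballCard S n - #A) ≤ ballCard S n * (n * ((cayleyGraph S).boundarySet A).ncard) := by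
  rcases Nat.eq_zero_or_pos (ballCard S n) with h0 | hpos
  · simp [h0]
  have hfin := cayleyGraph_finite_setOf_dist_le hpos 1
  have hcard : #hfin.toFinset = ballCard S n := (Set.ncard_eq_toFinset_card _ hfin).symm
  obtain ⟨g, hgB, hg⟩ := exists_card_mul_card_sub_le_card_mul A hfin.toFinset ⟨1, by simp⟩
  obtain ⟨w, hw⟩ := (cayleyGraph_connected hgen).exists_walk_length_eq_dist 1 g
  have hgn : w.length ≤ n := by simpa [hw] using hgB
  have hwalk := card_filter_mul_notMem_le_length A hA w
  rw [inv_one, one_mul] at hwalk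
  rw [hcard] at hg
  calc #A * (ballCard S n - #A) ≤ ballCard S n * #{x ∈ A | x * g ∉ A} := hg
    _ ≤ _ := by gcongr; exact hwalk.trans (by gcongr)

end Isoperimetry

lemma sq_lt_thirty_two_mul_sq {a b d n P : ℕ} (ha : 0 < a) (hd : d * (d + 1) ≤ 2 * a)
    (hn : n ^ 2 ≤ 6 * a) (hb : 3 * a ≤ b) (hiso : a * (b - a) ≤ b * (n * P)) :
    d ^ 2 < 32 * P ^ 2 := by
  have hnP : 2 * a ≤ 3 * (n * P) := by
    obtain ⟨c, rfl⟩ : ∃ c, b = a + c := ⟨b - a, by omega⟩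
    rw [Nat.add_sub_cancel_left] at hiso
    nlinarith
  have hP : 2 * a ≤ 27 * P ^ 2 := by nlinarith
  nlinarith

theorem stmt_8_general {G : Type*} [Group G] (S : Set G)
    (hgen : Subgroup.closure S = ⊤)
    (hb : ∀ n : ℕ, (n + 1) * (n + 2) ≤ 2 * ballCard S n)
    (A : Set G) (hA : A.Finite) (hne : A.Nonempty) :
    ((cayleyGraph S).depthSet A : ℝ)
      < 4 * Real.sqrt 2 * (((cayleyGraph S).boundarySet A).ncard : ℝ) := by
  classical
  lift A to Finset G using hA
  have hbdry := cayleyGraph_boundarySet_finite (by linarith [hb 1]) A.finite_toSet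
  set n := Nat.sqrt (6 * #A)
  have hball : 3 * #A ≤ ballCard S n := by nlinarith [hb n, Nat.lt_succ_sqrt' (6 * #A)]
  have hsq := sq_lt_thirty_two_mul_sq (card_pos.2 hne)
    (cayleyGraph_depthSet_mul_succ_le hb A hne) (Nat.sqrt_le' _) hball
    (card_mul_ballCard_sub_card_le hgen A hbdry n)
  have h32 : (4 * Real.sqrt 2) ^ 2 = 32 := by
    rw [mul_pow, Real.sq_sqrt zero_le_two]; norm_num
  refine lt_of_pow_lt_pow_left₀ 2 (by positivity) ?_
  rw [mul_pow, h32]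
  exact_mod_cast hsq

/-- If the Cayley graph of a finitely generated group has at least quadratic growth,
`b(n) ≥ (n+1)(n+2)/2`, then every finite nonempty set `A` of vertices satisfies
`depth(A) < 4√2 ⬝ |∂A|`. -/
theorem stmt_8 {G : Type*} [Group G] (S : Set G) (hS : S.Finite)
    (hgen : Subgroup.closure S = ⊤)
    (hb : ∀ n : ℕ, (n + 1) * (n + 2) ≤ 2 * ballCard S n)
    (A : Set G) (hA : A.Finite) (hne : A.Nonempty) :
    ((cayleyGraph S).depthSet A : ℝ)
      < 4 * Real.sqrt 2 * (((cayleyGraph S).boundarySet A).ncard : ℝ) :=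
  stmt_8_general S hgen hb A hA hne
end
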